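/- Let 𝒞 be a 2-category. The identity assignment P A := A together with units y_A := id_A and left extensions F̄ := F (exhibited by identity 2-cells) forms a KZ doctrine on 𝒞, and for this identity KZ doctrine a 1-cell L : A ⟶ B is P-admissible if and only if L has a right adjoint in 𝒞. Consequently, if 𝒞 contains a 1-cell with no right adjoint, then the class of P-admissible 1-cells of this KZ doctrine contains all identity 1-cells but is not a right ideal. -/

import Mathlib

open CategoryTheory Bicategory

universe w v u

variable {𝒞 : Type u} [Bicategory.{w, v} 𝒞]

/-- A 2-cell `η : I ⟶ L ≫ R` exhibits `R` as a left extension of `I` along `L` when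
pasting with `η` gives a bijection between 2-cells `R ⟶ M` and 2-cells `I ⟶ L ≫ M`. -/
def ExhibitsLeftExt {a b c : 𝒞} (L : a ⟶ b) (I : a ⟶ c) (R : b ⟶ c)
    (η : I ⟶ L ≫ R) : Prop :=
  ∀ M : b ⟶ c, Function.Bijective (fun σ : R ⟶ M => η ≫ L ◁ σ)

/-- The left extension `(R, η)` of `I` along `L` is respected by `E` when the whiskering of
`η` by `E` exhibits `R ≫ E` as a left extension of `I ≫ E` along `L`. -/
def RespectsLeftExt {a b c d : 𝒞} (L : a ⟶ b) (I : a ⟶ c) (R : b ⟶ c)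
    (η : I ⟶ L ≫ R) (E : c ⟶ d) : Prop :=
  ExhibitsLeftExt L (I ≫ E) (R ≫ E) ((η ▷ E) ≫ (α_ L R E).hom)

/-- A 2-cell `η : I ⟶ L ≫ R` exhibits `L` as a left lifting of `I` through `R` when pasting
with `η` gives a bijection between 2-cells `L ⟶ K` and 2-cells `I ⟶ K ≫ R`. -/
def ExhibitsLeftLift {a b c : 𝒞} (R : b ⟶ c) (I : a ⟶ c) (L : a ⟶ b)
    (η : I ⟶ L ≫ R) : Prop :=
  ∀ K : a ⟶ b, Function.Bijective (fun δ : L ⟶ K => η ≫ δ ▷ R)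

/-- The left lifting is absolute when it is preserved by whiskering with any 1-cell `F`. -/
def ExhibitsAbsLeftLift {a b c : 𝒞} (R : b ⟶ c) (I : a ⟶ c) (L : a ⟶ b)
    (η : I ⟶ L ≫ R) : Prop :=
  ∀ {x : 𝒞} (F : x ⟶ a),
    ExhibitsLeftLift R (F ≫ I) (F ≫ L) ((F ◁ η) ≫ (α_ F L R).inv)

/-- A 1-cell is (representably) fully faithful when whiskering by it is bijective on 2-cells. -/
def FullyFaithful1Cell {a b : 𝒞} (F : a ⟶ b) : Prop :=
  ∀ {x : 𝒞} (u v : x ⟶ a), Function.Bijective (fun σ : u ⟶ v => σ ▷ F)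

/-- A KZ doctrine on a 2-category (Marmolejo–Wood style, in terms of left extensions). -/
structure KZDoctrine (𝒞 : Type u) [Bicategory.{w, v} 𝒞] where
  /-- action on objects -/
  P : 𝒞 → 𝒞
  /-- the units -/
  y : ∀ A : 𝒞, A ⟶ P A
  /-- chosen left extensions along the units -/
  ext : ∀ {A C : 𝒞}, (A ⟶ P C) → (P A ⟶ P C)
  /-- the invertible 2-cells exhibiting the chosen left extensions -/
  c : ∀ {A C : 𝒞} (F : A ⟶ P C), F ≅ y A ≫ ext F
  ext_isLeftExt : ∀ {A C : 𝒞} (F : A ⟶ P C),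
    ExhibitsLeftExt (y A) F (ext F) (c F).hom
  /-- (a) the identity 2-cell exhibits `𝟙 (P A)` as a left extension of `y A` along `y A` -/
  y_selfExt : ∀ A : 𝒞, ExhibitsLeftExt (y A) (y A) (𝟙 (P A)) (ρ_ (y A)).inv
  /-- (b) the chosen left extensions respect each other -/
  ext_respects : ∀ {A B C : 𝒞} (F : A ⟶ P B) (G : B ⟶ P C),
    RespectsLeftExt (y A) F (ext F) (c F).hom (ext G)

/-- `lan L` (also denoted `PL`), the chosen left extension of `y B ∘ L` along `y A`. -/
abbrev KZDoctrine.lan (D : KZDoctrine 𝒞) {A B : 𝒞} (L : A ⟶ B) : D.P A ⟶ D.P B :=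
  D.ext (L ≫ D.y B)

/-- An object `X` is `P`-cocomplete when every `G : A ⟶ X` admits a left extension along
`y A` exhibited by an invertible 2-cell, and these left extensions respect the chosen left
extensions of the KZ doctrine. -/
def PCocomplete (D : KZDoctrine 𝒞) (X : 𝒞) : Prop :=
  ∀ {A : 𝒞} (G : A ⟶ X), ∃ (Gb : D.P A ⟶ X) (cG : G ≅ D.y A ≫ Gb),
    ExhibitsLeftExt (D.y A) G Gb cG.hom ∧
    ∀ {A' : 𝒞} (F : A' ⟶ D.P A),
      RespectsLeftExt (D.y A') F (D.ext F) (D.c F).hom Gb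

/-- A 1-cell is a `P`-homomorphism when it respects all left extensions along units. -/
def PHomomorphism (D : KZDoctrine 𝒞) {X Y : 𝒞} (E : X ⟶ Y) : Prop :=
  ∀ {A : 𝒞} (G : A ⟶ X) (Gb : D.P A ⟶ X) (η : G ⟶ D.y A ≫ Gb),
    ExhibitsLeftExt (D.y A) G Gb η → RespectsLeftExt (D.y A) G Gb η E

/-- The data `(R, φ)` witnesses `P`-admissibility of `L`: `φ` exhibits `R` as a left
extension of `y A` along `L`, and this left extension is respected by every left extension
`Hb : P A ⟶ X` along `y A` into every `P`-cocomplete object `X`. -/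
def AdmissibleData (D : KZDoctrine 𝒞) {A B : 𝒞} (L : A ⟶ B) (R : B ⟶ D.P A)
    (φ : D.y A ⟶ L ≫ R) : Prop :=
  ExhibitsLeftExt L (D.y A) R φ ∧
  ∀ {X : 𝒞}, PCocomplete D X →
    ∀ (H : A ⟶ X) (Hb : D.P A ⟶ X) (cH : H ≅ D.y A ≫ Hb),
      ExhibitsLeftExt (D.y A) H Hb cH.hom → RespectsLeftExt L (D.y A) R φ Hb

/-- A 1-cell `L` is `P`-admissible when some `(R, φ)` witnesses its admissibility. -/
def PAdmissible (D : KZDoctrine 𝒞) {A B : 𝒞} (L : A ⟶ B) : Prop :=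
  ∃ (R : B ⟶ D.P A) (φ : D.y A ⟶ L ≫ R), AdmissibleData D L R φ

/-!
For the identity doctrine every object is cocomplete and every 1-cell `H` is its own left
extension along an identity, so `L` is admissible exactly when some left extension `(R, φ)` of
the identity along `L` is preserved by every 1-cell, i.e. is an absolute left Kan extension;
these are precisely the units of adjunctions `L ⊣ R`. All identities have right adjoints, and
right adjoints of `L ≫ 𝟙 B` are right adjoints of `L`, so if `L` has none then `L ≫ 𝟙 B` is not
admissible although `𝟙 B` is.
-/

namespace CategoryTheory.Bicategory.Adjunction

variable {a b : 𝒞}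

def ofIsoLeft {f f' : a ⟶ b} {g : b ⟶ a} (adj : f ⊣ g) (e : f ≅ f') : f' ⊣ g where
  unit := adj.unit ≫ e.hom ▷ g
  counit := g ◁ e.inv ≫ adj.counit
  left_triangle := by
    calc _ = 𝟙 _ ⊗≫ adj.unit ▷ f' ⊗≫ (e.hom ▷ (g ≫ f') ≫ f' ◁ g ◁ e.inv) ⊗≫
              f' ◁ adj.counit ⊗≫ 𝟙 _ := by
          unfold leftZigzag; bicategory
      _ = 𝟙 _ ⊗≫ (adj.unit ▷ f' ≫ (f ≫ g) ◁ e.inv) ⊗≫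
              (e.hom ▷ (g ≫ f) ≫ f' ◁ adj.counit) ⊗≫ 𝟙 _ := by
          rw [← whisker_exchange]; bicategory
      _ = 𝟙 _ ⊗≫ (𝟙 a ◁ e.inv ≫ leftZigzag adj.unit adj.counit ≫ e.hom ▷ 𝟙 b) ⊗≫ 𝟙 _ := by
          rw [← whisker_exchange, ← whisker_exchange]; unfold leftZigzag; bicategory
      _ = _ := by
          rw [adj.left_triangle]
          simp [bicategoricalComp]
  right_triangle := by
    calc _ = 𝟙 _ ⊗≫ g ◁ adj.unit ⊗≫ ((g ◁ e.hom) ▷ g ≫ (g ◁ e.inv) ▷ g) ⊗≫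
              adj.counit ▷ g ⊗≫ 𝟙 _ := by
          unfold rightZigzag; bicategory
      _ = _ := by
          rw [← comp_whiskerRight, ← whiskerLeft_comp, e.hom_inv_id, whiskerLeft_id,
            id_whiskerRight, ← adj.right_triangle]
          unfold rightZigzag; bicategory

end CategoryTheory.Bicategory.Adjunction

section LeftExtensions

variable {a b c : 𝒞}

theorem exhibitsLeftExt_iff_isKan (L : a ⟶ b) (I : a ⟶ c) (R : b ⟶ c) (η : I ⟶ L ≫ R) :
    ExhibitsLeftExt L I R η ↔ Nonempty (LeftExtension.mk R η).IsKan := by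
  constructor
  · intro h
    let e (s : LeftExtension L I) := Equiv.ofBijective _ (h s.extension)
    refine ⟨.mk (fun s => LeftExtension.homMk ((e s).symm s.unit) ((e s).apply_symm_apply _))
      fun s τ => StructuredArrow.hom_ext _ _ ((h s.extension).injective ?_)⟩
    exact (LeftExtension.w τ).trans ((e s).apply_symm_apply s.unit).symm
  · rintro ⟨H⟩ M
    exact ⟨fun σ σ' hσ => H.hom_ext hσ,
      fun τ => ⟨H.desc (.mk M τ), H.fac (.mk M τ)⟩⟩

theorem respectsLeftExt_iff_isKan_whisker (L : a ⟶ b) (I : a ⟶ c) (R : b ⟶ c)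
    (η : I ⟶ L ≫ R) {d : 𝒞} (E : c ⟶ d) :
    RespectsLeftExt L I R η E ↔ Nonempty ((LeftExtension.mk R η).whisker E).IsKan :=
  exhibitsLeftExt_iff_isKan _ _ _ _

theorem exhibitsLeftExt_id_of_iso {I R : a ⟶ c} (η : I ≅ 𝟙 a ≫ R) :
    ExhibitsLeftExt (𝟙 a) I R η.hom := by
  intro M
  rw [Function.bijective_iff_has_inverse]
  exact ⟨fun τ => (λ_ R).inv ≫ η.inv ≫ τ ≫ (λ_ M).hom, fun σ => by simp, fun τ => by simp⟩

end LeftExtensions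

def idKZ (𝒞 : Type u) [Bicategory.{w, v} 𝒞] : KZDoctrine 𝒞 where
  P A := A
  y A := 𝟙 A
  ext F := F
  c F := (λ_ F).symm
  ext_isLeftExt F := exhibitsLeftExt_id_of_iso (λ_ F).symm
  y_selfExt A := exhibitsLeftExt_id_of_iso (ρ_ (𝟙 A)).symm
  ext_respects F G := exhibitsLeftExt_id_of_iso (whiskerRightIso (λ_ F).symm G ≪≫ α_ _ _ _)

namespace idKZ

theorem pCocomplete (X : 𝒞) : PCocomplete (idKZ 𝒞) X := fun G =>
  ⟨G, (λ_ G).symm, exhibitsLeftExt_id_of_iso _, fun F =>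
    exhibitsLeftExt_id_of_iso (whiskerRightIso (λ_ F).symm G ≪≫ α_ _ _ _)⟩

theorem admissibleData_iff {A B : 𝒞} (L : A ⟶ B) (R : B ⟶ A) (φ : 𝟙 A ⟶ L ≫ R) :
    AdmissibleData (idKZ 𝒞) L R φ ↔ Nonempty (LeftExtension.mk R φ).IsAbsKan := by
  constructor
  · rintro ⟨-, hresp⟩
    refine ⟨fun h => ((respectsLeftExt_iff_isKan_whisker L _ R φ h).mp ?_).some⟩
    exact hresp (pCocomplete _) h h (λ_ h).symm (exhibitsLeftExt_id_of_iso _)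
  · rintro ⟨H⟩
    exact ⟨(exhibitsLeftExt_iff_isKan _ _ _ _).mpr ⟨H.isKan⟩,
      fun _ _ Hb _ _ => (respectsLeftExt_iff_isKan_whisker _ _ _ _ _).mpr ⟨H Hb⟩⟩

theorem pAdmissible_iff {A B : 𝒞} (L : A ⟶ B) :
    PAdmissible (idKZ 𝒞) L ↔ ∃ R : B ⟶ A, Nonempty (Adjunction L R) := by
  constructor
  · rintro ⟨R, φ, hφ⟩
    obtain ⟨H⟩ := (admissibleData_iff L R φ).mp hφ
    exact ⟨R, ⟨LeftExtension.IsAbsKan.adjunction (.mk R φ) H⟩⟩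
  · rintro ⟨R, ⟨adj⟩⟩
    exact ⟨R, adj.unit, (admissibleData_iff L R adj.unit).mpr ⟨adj.isAbsoluteLeftKan⟩⟩

end idKZ

/-- The identity assignment with identity units and `F̄ := F` (exhibited by
identity 2-cells, i.e. unitors) forms a KZ doctrine; for it, a 1-cell is `P`-admissible
iff it has a right adjoint; hence all identities are admissible, but if `𝒞` has a 1-cell
with no right adjoint then the admissible 1-cells do not form a right ideal. -/
theorem stmt18 (𝒞 : Type u) [Bicategory.{w, v} 𝒞] :
    ∃ D : KZDoctrine 𝒞,
      D.P = (fun A => A) ∧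
      HEq D.y (fun A : 𝒞 => 𝟙 A) ∧
      HEq (fun (A C : 𝒞) (F : A ⟶ D.P C) => D.ext F)
        (fun (A C : 𝒞) (F : A ⟶ C) => F) ∧
      HEq (fun (A C : 𝒞) (F : A ⟶ D.P C) => D.c F)
        (fun (A C : 𝒞) (F : A ⟶ C) => (λ_ F).symm) ∧
      (∀ {A B : 𝒞} (L : A ⟶ B),
        PAdmissible D L ↔ ∃ R : B ⟶ A, Nonempty (Bicategory.Adjunction L R)) ∧
      (∀ A : 𝒞, PAdmissible D (𝟙 A)) ∧
      ((∃ (A B : 𝒞) (L : A ⟶ B),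
          ∀ R : B ⟶ A, IsEmpty (Bicategory.Adjunction L R)) →
        ¬ ∀ {A B X : 𝒞} (L : A ⟶ B) (F : X ⟶ A),
            PAdmissible D L → PAdmissible D (F ≫ L)) := by
  have id_admissible (A : 𝒞) : PAdmissible (idKZ 𝒞) (𝟙 A) :=
    (idKZ.pAdmissible_iff _).mpr ⟨𝟙 A, ⟨Adjunction.id A⟩⟩
  refine ⟨idKZ 𝒞, rfl, .rfl, .rfl, .rfl, idKZ.pAdmissible_iff, id_admissible, ?_⟩
  rintro ⟨A, B, L, hL⟩ hideal
  obtain ⟨R, ⟨adj⟩⟩ := (idKZ.pAdmissible_iff (L ≫ 𝟙 B)).mp (hideal (𝟙 B) L (id_admissible B))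
  exact (hL R).false (adj.ofIsoLeft (ρ_ L))
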